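/- arXiv:1812.06475 — 2 statements merged into one kernel-verified Lean document; each statement's English description precedes it below -/
import Mathlib

section
/- Let ψ : [1, ∞) → (0, ∞) be differentiable and decreasing on [1, 2n−1], with ψ(t)/|ψ'(t)| strictly increasing. Then the function φ_n(t) := ψ(t) ψ(2n − t) is decreasing on [1, n]. -/
open Real Set

theorem phi_antitone (n : ℕ) (hn : 1 ≤ n) (ψ ψ' : ℝ → ℝ)
    (hderiv : ∀ t ∈ Set.Icc (1:ℝ) (2 * n - 1), HasDerivAt ψ (ψ' t) t)
    (hψ'neg : ∀ t ∈ Set.Icc (1:ℝ) (2 * n - 1), ψ' t < 0)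
    (hψpos : ∀ t ∈ Set.Icc (1:ℝ) (2 * n - 1), 0 < ψ t)
    (hmono : StrictMonoOn (fun t => ψ t / |ψ' t|) (Set.Icc (1:ℝ) (2 * n - 1))) :
    AntitoneOn (fun t => ψ t * ψ (2 * n - t)) (Set.Icc (1:ℝ) (n : ℝ)) := by
  have hn1 : (1:ℝ) ≤ (n:ℝ) := by exact_mod_cast hn
  have hmem : ∀ t ∈ Set.Icc (1:ℝ) (n:ℝ), t ∈ Set.Icc (1:ℝ) (2*n-1) ∧
      (2*n - t) ∈ Set.Icc (1:ℝ) (2*n-1) := by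
    intro t ht
    obtain ⟨h1, h2⟩ := ht
    constructor
    · exact ⟨h1, by linarith⟩
    · exact ⟨by linarith, by linarith⟩
  have hd : ∀ t ∈ Set.Icc (1:ℝ) (n:ℝ),
      HasDerivAt (fun t => ψ t * ψ (2 * n - t))
        (ψ' t * ψ (2*n - t) + ψ t * (-ψ' (2*n - t))) t := by
    intro t ht
    obtain ⟨ht1, ht2⟩ := hmem t ht
    have h1 := hderiv t ht1
    have h2 : HasDerivAt (fun t => ψ (2*n - t)) (-ψ' (2*n - t)) t := by
      have := (hderiv _ ht2).comp t (((hasDerivAt_id t).const_sub (2*(n:ℝ))))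
      exact this.congr_deriv (by simp)
    exact h1.mul h2
  apply antitoneOn_of_deriv_nonpos (convex_Icc (1:ℝ) (n:ℝ))
    (fun t ht => (hd t ht).continuousAt.continuousWithinAt)
  · intro x hx
    rw [interior_Icc] at hx
    exact ((hd x ⟨hx.1.le, hx.2.le⟩).differentiableAt.differentiableWithinAt)
  · intro x hx
    rw [interior_Icc] at hx
    have hx' : x ∈ Set.Icc (1:ℝ) (n:ℝ) := ⟨hx.1.le, hx.2.le⟩
    obtain ⟨h1, h2⟩ := hmem x hx'
    rw [(hd x hx').deriv]
    have hlt : x < 2*n - x := by have := hx.2; linarith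
    have key := (hmono h1 h2 hlt).le
    have hp1 := hψ'neg x h1
    have hp2 := hψ'neg _ h2
    have hq1 := hψpos x h1
    have hq2 := hψpos _ h2
    simp only at key
    rw [abs_of_neg hp1, abs_of_neg hp2, div_le_div_iff₀ (by linarith) (by linarith)] at key
    nlinarith
end

section
/- Let ψ be decreasing and positive on [n, 2n], and suppose ψ(t)ψ(2n−t) is decreasing on [1, n] with ψ(t)ψ(2n−t) ≥ ψ(n)² for t ∈ [1, n]. Then for any set γ of 2n integers, the sum ∑_{|k| ≤ n−1, k ∉ γ} ψ(|k|)ψ(2n − |k|) + ∑_{n ≤ |k| ≤ 2n, k ∉ γ} ψ(|k|)² (with ψ(0) := ψ(1)) is at least ψ(n)² + 2∑_{k=n+1}^{2n} ψ(k)² > ∑_{k=n}^{2n} ψ(k)². -/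
/-!
Each kept term is at least `ψ (max |k| n) ^ 2` (using `hprod` when `|k| < n`). This lower bound
takes its maximal value `ψ n ^ 2` on all of `[-n, n]`, so its sum over the at least `2n + 1` kept
indices is at least its sum over `{0} ∪ {k : n < |k| ≤ 2n}`, which is
`ψ n ^ 2 + 2 ∑_{k=n+1}^{2n} ψ k ^ 2`.
-/

open Finset

namespace Finset

theorem sum_le_sum_of_card_le_of_forall_sdiff_le {ι M : Type*} [DecidableEq ι]
    [AddCommMonoid M] [LinearOrder M] [IsOrderedAddMonoid M] {s t : Finset ι} {f : ι → M}
    (hcard : #s ≤ #t) (hle : ∀ i ∈ s \ t, ∀ j ∈ t \ s, f i ≤ f j)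
    (hnonneg : ∀ j ∈ t \ s, 0 ≤ f j) : ∑ i ∈ s, f i ≤ ∑ j ∈ t, f j := by
  rw [← sum_inter_add_sum_sdiff s t, ← sum_inter_add_sum_sdiff t s, inter_comm]
  refine add_le_add_right ?_ _
  have hsdiff : #(s \ t) ≤ #(t \ s) := card_sdiff_le_card_sdiff_iff.mpr hcard
  rcases (t \ s).eq_empty_or_nonempty with hts | hts
  · rw [hts, card_empty, Nat.le_zero, card_eq_zero] at hsdiff
    simp [hsdiff, hts]
  obtain ⟨j, hj, hmin⟩ := exists_min_image (t \ s) f hts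
  calc ∑ i ∈ s \ t, f i ≤ #(s \ t) • f j := sum_le_card_nsmul _ _ _ fun i hi ↦ hle i hi j hj
    _ ≤ #(t \ s) • f j := nsmul_le_nsmul_left (hnonneg j hj) hsdiff
    _ ≤ ∑ j ∈ t \ s, f j := card_nsmul_le_sum _ _ _ hmin

def natAbsPreimage (I : Finset ℕ) : Finset ℤ :=
  I.image (↑) ∪ I.image (fun i : ℕ ↦ -(i : ℤ))

variable {I : Finset ℕ}

@[simp]
theorem mem_natAbsPreimage {k : ℤ} : k ∈ I.natAbsPreimage ↔ k.natAbs ∈ I := by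
  constructor
  · intro hk
    rcases mem_union.mp hk with hk | hk <;> obtain ⟨i, hi, rfl⟩ := mem_image.mp hk <;> simpa
  · intro hk
    rcases Int.natAbs_eq k with h | h <;> rw [h]
    · exact mem_union_left _ (mem_image_of_mem _ hk)
    · exact mem_union_right _ (mem_image_of_mem (fun i : ℕ ↦ -(i : ℤ)) hk)

theorem sum_natAbsPreimage {M : Type*} [AddCommMonoid M] (hI : 0 ∉ I) (f : ℕ → M) :
    ∑ k ∈ I.natAbsPreimage, f k.natAbs = 2 • ∑ i ∈ I, f i := by
  have hdisj : Disjoint (I.image ((↑) : ℕ → ℤ)) (I.image (fun i : ℕ ↦ -(i : ℤ))) := by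
    simp only [disjoint_left, mem_image]
    rintro _ ⟨i, hi, rfl⟩ ⟨j, -, hji⟩
    obtain rfl : i = 0 := by omega
    exact hI hi
  rw [natAbsPreimage, sum_union hdisj, sum_image (by simp), sum_image (by simp)]
  simp [two_nsmul]

theorem card_natAbsPreimage (hI : 0 ∉ I) : #I.natAbsPreimage = 2 * #I := by
  rw [card_eq_sum_ones, card_eq_sum_ones I, ← smul_eq_mul]
  exact sum_natAbsPreimage hI (fun _ ↦ 1)

end Finset

def clampSq (ψ : ℕ → ℝ) (n : ℕ) (k : ℤ) : ℝ :=
  ψ (max k.natAbs n) ^ 2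

section clampSq

variable {ψ : ℕ → ℝ} {n : ℕ}

theorem clampSq_of_natAbs_le {k : ℤ} (hk : k.natAbs ≤ n) : clampSq ψ n k = ψ n ^ 2 := by
  rw [clampSq, max_eq_right hk]

theorem clampSq_of_le_natAbs {k : ℤ} (hk : n ≤ k.natAbs) : clampSq ψ n k = ψ k.natAbs ^ 2 := by
  rw [clampSq, max_eq_left hk]

theorem clampSq_le (hψ₀ : ∀ k, 0 ≤ ψ k) (hψ : AntitoneOn ψ (Set.Ici n)) (k : ℤ) :
    clampSq ψ n k ≤ ψ n ^ 2 :=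
  pow_le_pow_left₀ (hψ₀ _) (hψ Set.self_mem_Ici (le_max_right _ n) (le_max_right _ n)) 2

theorem sum_clampSq_insert_zero_natAbsPreimage (m : ℕ) :
    ∑ k ∈ insert 0 (Icc (n + 1) m).natAbsPreimage, clampSq ψ n k
      = ψ n ^ 2 + 2 * ∑ k ∈ Icc (n + 1) m, ψ k ^ 2 := by
  have hI : 0 ∉ Icc (n + 1) m := by simp
  have hclamp : ∀ k ∈ (Icc (n + 1) m).natAbsPreimage, clampSq ψ n k = ψ k.natAbs ^ 2 :=
    fun k hk ↦ clampSq_of_le_natAbs (Nat.le_of_succ_le (mem_Icc.mp (mem_natAbsPreimage.mp hk)).1)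
  rw [sum_insert (by simp), sum_congr rfl hclamp, sum_natAbsPreimage hI (ψ · ^ 2),
    clampSq_of_natAbs_le (by simp), two_nsmul, two_mul]

theorem sum_clampSq_ge (hψ₀ : ∀ k, 0 ≤ ψ k) (hψ : AntitoneOn ψ (Set.Ici n)) {m : ℕ}
    {T : Finset ℤ} (hT : T ⊆ Icc (-(m : ℤ)) m) (hcard : 2 * (m - n) + 1 ≤ #T) :
    ψ n ^ 2 + 2 * ∑ k ∈ Icc (n + 1) m, ψ k ^ 2 ≤ ∑ k ∈ T, clampSq ψ n k := by
  rw [← sum_clampSq_insert_zero_natAbsPreimage]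
  refine sum_le_sum_of_card_le_of_forall_sdiff_le ?_ (fun i _ j hj ↦ ?_) fun _ _ ↦ sq_nonneg _
  · refine (card_insert_le _ _).trans ?_
    rw [card_natAbsPreimage (by simp), Nat.card_Icc]
    omega
  · obtain ⟨hjT, hjU⟩ := mem_sdiff.mp hj
    have hjm := mem_Icc.mp (hT hjT)
    simp only [mem_insert, mem_natAbsPreimage, mem_Icc, not_or] at hjU
    rw [clampSq_of_natAbs_le (k := j) (by omega)]
    exact clampSq_le hψ₀ hψ i

end clampSq

theorem removed_terms_lower_bound_general (n : ℕ) (hn : 1 ≤ n) (ψ : ℕ → ℝ)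
    (hpos : ∀ k, 0 < ψ k)
    (hanti : ∀ j k, 1 ≤ j → j ≤ k → ψ k ≤ ψ j)
    (hprod : ∀ k ≤ n - 1, ψ k * ψ (2 * n - k) ≥ ψ n ^ 2)
    (γ : Finset ℤ) (hγ : γ.card = 2 * n) :
    (∑ k ∈ (Finset.Icc (-(2 * n : ℤ)) (2 * n)) \ γ,
        (if k.natAbs ≤ n - 1 then ψ k.natAbs * ψ (2 * n - k.natAbs) else ψ k.natAbs ^ 2))
      ≥ ψ n ^ 2 + 2 * ∑ k ∈ Finset.Icc (n + 1) (2 * n), ψ k ^ 2 ∧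
    ψ n ^ 2 + 2 * ∑ k ∈ Finset.Icc (n + 1) (2 * n), ψ k ^ 2 >
      ∑ k ∈ Finset.Icc n (2 * n), ψ k ^ 2 := by
  have hψ : AntitoneOn ψ (Set.Ici n) := fun j hj k _ hjk ↦ hanti j k (hn.trans hj) hjk
  have hclamp_le : ∀ k : ℤ, clampSq ψ n k ≤
      if k.natAbs ≤ n - 1 then ψ k.natAbs * ψ (2 * n - k.natAbs) else ψ k.natAbs ^ 2 := by
    intro k
    split_ifs with hk
    · exact (clampSq_of_natAbs_le (by omega)).trans_le (hprod _ hk)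
    · exact (clampSq_of_le_natAbs (by omega)).le
  have hcard : 2 * (2 * n - n) + 1 ≤ #(Icc (-(2 * n : ℤ)) (2 * n) \ γ) := by
    have := card_le_card_sdiff_add_card (s := Icc (-(2 * n : ℤ)) (2 * n)) (t := γ)
    rw [Int.card_Icc] at this
    omega
  refine ⟨?_, ?_⟩
  · calc _ ≥ ∑ k ∈ Icc (-(2 * n : ℤ)) (2 * n) \ γ, clampSq ψ n k :=
          sum_le_sum fun k _ ↦ hclamp_le k
      _ ≥ _ := sum_clampSq_ge (fun k ↦ (hpos k).le) hψ (by exact_mod_cast sdiff_subset) hcard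
  · have htail_pos : 0 < ∑ k ∈ Icc (n + 1) (2 * n), ψ k ^ 2 :=
      sum_pos (fun k _ ↦ pow_pos (hpos k) 2) (nonempty_Icc.mpr (by omega))
    rw [← add_sum_Ioc_eq_sum_Icc (show n ≤ 2 * n by omega), ← Icc_add_one_left_eq_Ioc]
    linarith

theorem removed_terms_lower_bound (n : ℕ) (hn : 1 ≤ n) (ψ : ℕ → ℝ)
    (hpos : ∀ k, 0 < ψ k) (hψ0 : ψ 0 = ψ 1)
    (hanti : ∀ j k, 1 ≤ j → j ≤ k → ψ k ≤ ψ j)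
    (hprod : ∀ k ≤ n - 1, ψ k * ψ (2 * n - k) ≥ ψ n ^ 2)
    (γ : Finset ℤ) (hγ : γ.card = 2 * n) :
    (∑ k ∈ (Finset.Icc (-(2 * n : ℤ)) (2 * n)) \ γ,
        (if k.natAbs ≤ n - 1 then ψ k.natAbs * ψ (2 * n - k.natAbs) else ψ k.natAbs ^ 2))
      ≥ ψ n ^ 2 + 2 * ∑ k ∈ Finset.Icc (n + 1) (2 * n), ψ k ^ 2 ∧
    ψ n ^ 2 + 2 * ∑ k ∈ Finset.Icc (n + 1) (2 * n), ψ k ^ 2 >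
      ∑ k ∈ Finset.Icc n (2 * n), ψ k ^ 2 :=
  removed_terms_lower_bound_general n hn ψ hpos hanti hprod γ hγ
end
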